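/- A simple graph G is line perfect (i.e., its line graph L(G) is a perfect graph) if and only if G contains no odd cycle of length at least 5 as a subgraph. -/

import Mathlib

open SimpleGraph

/-- A graph is perfect if every induced subgraph has chromatic number equal to its
clique number. -/
def SimpleGraph.IsPerfect {V : Type*} (H : SimpleGraph V) : Prop :=
  ∀ s : Set V, (H.induce s).chromaticNumber = ((H.induce s).cliqueNum : ℕ∞)

/-- `G` contains `H` as a (not necessarily induced) subgraph. -/
def ContainsSub {V W : Type*} (G : SimpleGraph V) (H : SimpleGraph W) : Prop :=
  ∃ f : W → V, Function.Injective f ∧ ∀ a b, H.Adj a b → G.Adj (f a) (f b)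

/-!
If `G` has an odd cycle of length `n ≥ 5`, the edges of that cycle induce a copy of `Cₙ` in the
line graph. This copy has chromatic number 3 but no triangle.

Conversely, an edge-induced subgraph of `L(G)` is the line graph of a subgraph `H` of `G`, and `H`
again has no long odd cycle, so it suffices to colour the edges of `H` with `k = ω(L(H))` colours.
The edges at a vertex, and the edges of a triangle, form cliques of `L(H)`. So `k` is at least the
maximum degree of `H`, and at least 3 if `H` has a triangle. We insert the edges one by one. To
insert `uv` when `α` is missing at `u` and `β` at `v`, swap the `α/β` Kempe chain starting at `u`.
If that chain reaches `v`, it closes an odd cycle with `uv`, so it is a triangle `uxv`. Two more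
Kempe swaps involving a third colour `γ` then free a common colour at `u` and `v`; whenever a swap
is blocked, we again find an odd cycle of length at least 5.
-/

namespace SimpleGraph

variable {V : Type*} {G H : SimpleGraph V} {u v w x : V}

lemma containsSub_iff_isContained {W : Type*} {A : SimpleGraph W} :
    ContainsSub G A ↔ A ⊑ G :=
  ⟨fun ⟨f, hf, hadj⟩ => ⟨⟨⟨f, hadj _ _⟩, hf⟩⟩,
    fun ⟨f⟩ => ⟨f, f.injective, fun _ _ => f.toHom.map_adj⟩⟩

def NoLongOddCycle (G : SimpleGraph V) : Prop :=
  ∀ ⦃v : V⦄ (p : G.Walk v v), p.IsCycle → Odd p.length → p.length < 5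

lemma noLongOddCycle_iff_not_containsSub :
    G.NoLongOddCycle ↔ ∀ n : ℕ, 5 ≤ n → Odd n → ¬ ContainsSub G (cycleGraph n) := by
  simp only [containsSub_iff_isContained]
  refine ⟨fun hG n hn hodd hC => ?_, fun h v p hp hodd => ?_⟩
  · obtain ⟨v, p, hp, rfl⟩ := (cycleGraph_isContained_iff (by omega)).mp hC
    exact absurd (hG p hp hodd) (by omega)
  · by_contra! h5
    exact h _ h5 hodd ((cycleGraph_isContained_iff hp.three_le_length).mpr ⟨v, p, hp, rfl⟩)

lemma NoLongOddCycle.anti (hle : H ≤ G) (hG : G.NoLongOddCycle) : H.NoLongOddCycle :=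
  fun _ p hp hodd => by simpa using hG (p.mapLe hle) (hp.mapLe hle) (by simpa using hodd)

lemma NoLongOddCycle.length_eq_two_of_isPath (hG : G.NoLongOddCycle) {p : G.Walk u v}
    (hp : p.IsPath) (hvu : G.Adj v u) (heven : Even p.length) : p.length = 2 := by
  have hne : p.length ≠ 1 := fun h => by simp [h] at heven
  have hcyc : (Walk.cons hvu p).IsCycle := (Walk.cons_isCycle_iff p hvu).mpr
    ⟨hp, fun h => hne (hp.length_eq_one_of_mem_edges (Sym2.eq_swap ▸ h))⟩
  have h5 := hG _ hcyc (by simpa using heven.add_one)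
  have h0 : p.length ≠ 0 := fun h => hvu.ne (Walk.eq_of_length_eq_zero h).symm
  obtain ⟨r, hr⟩ := heven
  simp only [Walk.length_cons] at h5
  omega

lemma Reachable.deleteEdges_or (h : G.Reachable u v) (x : V) :
    (G.deleteEdges {s(x, v)}).Reachable u v ∨ (G.deleteEdges {s(x, v)}).Reachable u x := by
  obtain ⟨p⟩ := h
  induction p with
  | nil => exact .inl .rfl
  | @cons a a' v hadj q ih =>
    by_cases he : s(a, a') = s(x, v)
    · rcases Sym2.eq_iff.mp he with ⟨rfl, -⟩ | ⟨rfl, -⟩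
      exacts [.inr .rfl, .inl .rfl]
    · have hadj' : (G.deleteEdges {s(x, v)}).Adj a a' := deleteEdges_adj.mpr ⟨hadj, he⟩
      exact ih.imp hadj'.reachable.trans hadj'.reachable.trans

lemma IsClique.ncard_le_cliqueNum {W : Type*} [Finite W] {A : SimpleGraph W} {s : Set W}
    (hs : A.IsClique s) : s.ncard ≤ A.cliqueNum := by
  rw [Set.ncard_eq_toFinset_card s]
  exact IsClique.card_le_cliqueNum (tc := by rwa [Set.Finite.coe_toFinset])

lemma Iso.cliqueNum_le {W : Type*} [Finite W] {A : SimpleGraph W} (f : G ≃g A) :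
    G.cliqueNum ≤ A.cliqueNum := by
  obtain ⟨t, ht⟩ := G.exists_isNClique_cliqueNum
  have hclique : A.IsClique (t.map f.toEquiv.toEmbedding : Set W) := by
    intro x hx y hy hxy
    obtain ⟨a, -, rfl⟩ := Finset.mem_map.mp hx
    obtain ⟨b, -, rfl⟩ := Finset.mem_map.mp hy
    exact f.map_adj_iff.mpr
      (ht.isClique (by simpa using hx) (by simpa using hy) fun h => hxy (h ▸ rfl))
  calc G.cliqueNum = (t.map f.toEquiv.toEmbedding).card := by rw [Finset.card_map, ht.card_eq]
    _ ≤ A.cliqueNum := hclique.card_le_cliqueNum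

lemma Iso.cliqueNum_eq [Finite V] {W : Type*} [Finite W] {A : SimpleGraph W} (f : G ≃g A) :
    G.cliqueNum = A.cliqueNum :=
  le_antisymm f.cliqueNum_le f.symm.cliqueNum_le

lemma cycleGraph_adj_iff_eq_add_one {n : ℕ} [NeZero n] (hn : 2 ≤ n) {i j : Fin n} :
    (cycleGraph n).Adj i j ↔ i = j + 1 ∨ j = i + 1 := by
  obtain ⟨m, rfl⟩ : ∃ m, n = m + 2 := ⟨n - 2, by omega⟩
  rw [cycleGraph_adj, sub_eq_iff_eq_add', sub_eq_iff_eq_add']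

lemma cycleGraph_cliqueFree_three {n : ℕ} [NeZero n] (hn : 4 ≤ n) :
    (cycleGraph n).CliqueFree 3 := by
  have h3 : (3 : Fin n) ≠ 0 := by
    simp [Fin.ext_iff, Nat.mod_eq_of_lt (by omega : 3 < n)]
  intro t ht
  obtain ⟨a, b, c, hab, hac, hbc, rfl⟩ := is3Clique_iff.mp ht
  have hne : a ≠ b ∧ a ≠ c ∧ b ≠ c := ⟨hab.ne, hac.ne, hbc.ne⟩
  rw [cycleGraph_adj_iff_eq_add_one (by omega)] at hab hac hbc
  grind

section CycleEdges

variable {n : ℕ} [NeZero n] (f : Fin n → V) (hadj : ∀ i, G.Adj (f i) (f (i + 1)))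

def cycleEdge (i : Fin n) : G.edgeSet := ⟨s(f i, f (i + 1)), hadj i⟩

variable {f} (hf : Function.Injective f) (hn : 3 ≤ n)
include hf hn

lemma cycleEdge_injective : Function.Injective (cycleEdge f hadj) := by
  have h2 : (2 : Fin n) ≠ 0 := by
    simp [Fin.ext_iff, Nat.mod_eq_of_lt (by omega : 2 < n)]
  intro i j hij
  have h : s(f i, f (i + 1)) = s(f j, f (j + 1)) := congrArg Subtype.val hij
  simp only [Sym2.eq_iff, hf.eq_iff] at h
  grind

lemma lineGraph_adj_cycleEdge_iff {i j : Fin n} :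
    G.lineGraph.Adj (cycleEdge f hadj i) (cycleEdge f hadj j) ↔ (cycleGraph n).Adj i j := by
  have h1 : (1 : Fin n) ≠ 0 := by
    simp [Fin.ext_iff, Nat.mod_eq_of_lt (by omega : 1 < n)]
  have hsucc (i : Fin n) : i + 1 ≠ i := fun h => h1 (add_eq_left.mp h)
  rw [lineGraph_adj_iff_exists, (cycleEdge_injective hadj hf hn).ne_iff,
    cycleGraph_adj_iff_eq_add_one (by omega)]
  simp only [cycleEdge, Sym2.mem_iff]
  constructor
  · rintro ⟨hij, w, hi, hj⟩
    rcases hi with rfl | rfl <;> rcases hj with h | h <;> simp only [hf.eq_iff] at h <;> grind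
  · rintro (rfl | rfl)
    · exact ⟨hsucc j, f (j + 1), Or.inl rfl, Or.inr rfl⟩
    · exact ⟨(hsucc i).symm, f (i + 1), Or.inr rfl, Or.inl rfl⟩

noncomputable def cycleEdgeIso :
    cycleGraph n ≃g G.lineGraph.induce (Set.range (cycleEdge f hadj)) where
  toEquiv := Equiv.ofInjective _ (cycleEdge_injective hadj hf hn)
  map_rel_iff' := lineGraph_adj_cycleEdge_iff hadj hf hn

end CycleEdges

lemma not_isPerfect_lineGraph_of_containsSub [Finite V] {n : ℕ} (hn : 5 ≤ n) (hodd : Odd n)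
    (hC : ContainsSub G (cycleGraph n)) : ¬ G.lineGraph.IsPerfect := by
  obtain ⟨f, hf, hfadj⟩ := hC
  have : NeZero n := ⟨by omega⟩
  have hadj i : G.Adj (f i) (f (i + 1)) :=
    hfadj _ _ ((cycleGraph_adj_iff_eq_add_one (by omega)).mpr (.inr rfl))
  have e := cycleEdgeIso hadj hf (by omega)
  intro hperf
  have h := hperf (Set.range (cycleEdge f hadj))
  rw [← chromaticNumber_congr e, ← e.cliqueNum_eq,
    chromaticNumber_cycleGraph_of_odd n (by omega) hodd] at h
  obtain ⟨t, ht⟩ := (cycleGraph n).exists_isNClique_cliqueNum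
  have h3 : (cycleGraph n).cliqueNum = 3 := by exact_mod_cast h.symm
  exact cycleGraph_cliqueFree_three (by omega) t (h3 ▸ ht)

section EdgeColoring

variable {C : Type*} {H' : SimpleGraph V} {c : Sym2 V → C} {α β γ : C}

def IsProperEdgeColoring (H : SimpleGraph V) (c : Sym2 V → C) : Prop :=
  ∀ ⦃w a b : V⦄, H.Adj w a → H.Adj w b → c s(w, a) = c s(w, b) → a = b

def MissesColor (H : SimpleGraph V) (c : Sym2 V → C) (w : V) (α : C) : Prop :=
  ∀ ⦃z : V⦄, H.Adj w z → c s(w, z) ≠ α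

lemma IsProperEdgeColoring.anti (hle : H ≤ G) (hc : G.IsProperEdgeColoring c) :
    H.IsProperEdgeColoring c :=
  fun _ _ _ ha hb => hc (hle ha) (hle hb)

lemma MissesColor.anti (hle : H ≤ G) (hw : G.MissesColor c w α) : H.MissesColor c w α :=
  fun _ hz => hw (hle hz)

lemma IsProperEdgeColoring.missesColor_deleteEdges (hc : H.IsProperEdgeColoring c)
    (hxv : H.Adj x v) :
    (H.deleteEdges {s(x, v)}).MissesColor c x (c s(x, v)) ∧
      (H.deleteEdges {s(x, v)}).MissesColor c v (c s(x, v)) := by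
  simp only [MissesColor, deleteEdges_adj, Set.mem_singleton_iff]
  refine ⟨fun z ⟨hxz, hne⟩ heq => hne ?_, fun z ⟨hvz, hne⟩ heq => hne ?_⟩
  · rw [hc hxz hxv heq]
  · rw [hc hvz hxv.symm (heq.trans (congrArg c Sym2.eq_swap)), Sym2.eq_swap]

lemma exists_missesColor [Finite V] (c : Sym2 V → C)
    (h : (H.incidenceSet w).ncard < Nat.card C) : ∃ α, H.MissesColor c w α := by
  have hne : c '' H.incidenceSet w ≠ Set.univ := fun heq => by
    have := Set.ncard_image_le (f := c) (Set.toFinite (H.incidenceSet w))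
    rw [heq, Set.ncard_univ] at this
    omega
  obtain ⟨α, hα⟩ := (Set.ne_univ_iff_exists_notMem _).mp hne
  exact ⟨α, fun z hz heq => hα ⟨s(w, z), ⟨hz, Sym2.mem_mk_left _ _⟩, heq⟩⟩

lemma IsProperEdgeColoring.update [DecidableEq V] {δ : C}
    (hc : (H.deleteEdges {s(u, v)}).IsProperEdgeColoring c)
    (hu : (H.deleteEdges {s(u, v)}).MissesColor c u δ)
    (hv : (H.deleteEdges {s(u, v)}).MissesColor c v δ) :
    H.IsProperEdgeColoring (Function.update c s(u, v) δ) := by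
  intro w a b ha hb heq
  have hdel {z} (hz : H.Adj w z) (hne : s(w, z) ≠ s(u, v)) :
      (H.deleteEdges {s(u, v)}).Adj w z :=
    deleteEdges_adj.mpr ⟨hz, hne⟩
  have hmiss {z} (hz : s(w, z) = s(u, v)) : (H.deleteEdges {s(u, v)}).MissesColor c w δ := by
    rcases Sym2.eq_iff.mp hz with ⟨rfl, -⟩ | ⟨rfl, -⟩
    exacts [hu, hv]
  by_cases hea : s(w, a) = s(u, v) <;> by_cases heb : s(w, b) = s(u, v)
  · exact Sym2.congr_right.mp (hea.trans heb.symm)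
  · rw [hea, Function.update_self, Function.update_of_ne heb] at heq
    exact absurd heq.symm (hmiss hea (hdel hb heb))
  · rw [heb, Function.update_self, Function.update_of_ne hea] at heq
    exact absurd heq (hmiss heb (hdel ha hea))
  · rw [Function.update_of_ne hea, Function.update_of_ne heb] at heq
    exact hc (hdel ha hea) (hdel hb heb) heq

def kempeChain (H : SimpleGraph V) (c : Sym2 V → C) (α β : C) : SimpleGraph V where
  Adj a b := H.Adj a b ∧ (c s(a, b) = α ∨ c s(a, b) = β)
  symm := ⟨fun _ _ h => ⟨h.1.symm, Sym2.eq_swap ▸ h.2⟩⟩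
  loopless := ⟨fun _ h => h.1.ne rfl⟩

lemma kempeChain_le : kempeChain H c α β ≤ H := fun _ _ h => h.1

lemma kempeChain_comm : kempeChain H c α β = kempeChain H c β α := by
  ext a b
  exact and_congr_right fun _ => or_comm

lemma kempeChain_deleteEdges (s : Set (Sym2 V)) :
    kempeChain (H.deleteEdges s) c α β = (kempeChain H c α β).deleteEdges s := by
  ext a b
  simp only [kempeChain, deleteEdges_adj]
  tauto

lemma IsProperEdgeColoring.subsingleton_neighborSet_kempeChain (hc : H.IsProperEdgeColoring c)
    (hw : H.MissesColor c w α) : ((kempeChain H c γ α).neighborSet w).Subsingleton :=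
  fun _ hy _ hz => hc hy.1 hz.1
    ((hy.2.resolve_right (hw hy.1)).trans (hz.2.resolve_right (hw hz.1)).symm)

lemma IsProperEdgeColoring.kempeChain_color_eq_iff_even (hc : H.IsProperEdgeColoring c)
    {b : V} (hb : H.MissesColor c b β) {a a' : V} (h : (kempeChain H c α β).Adj a a')
    (q : (kempeChain H c α β).Walk a' b) (hp : (Walk.cons h q).IsPath) :
    c s(a, a') = α ↔ Even q.length := by
  induction q generalizing a with
  | nil => simpa [Sym2.eq_swap] using h.2.resolve_right (Sym2.eq_swap (a := a) ▸ hb h.1.symm)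
  | @cons a' a'' b h' q ih =>
    have haa'' : a ≠ a'' := by
      rintro rfl
      exact (Walk.cons_isPath_iff _ _).mp hp |>.2 (by simp)
    have hcol : c s(a', a) ≠ c s(a', a'') := fun heq => haa'' (hc h.1.symm h'.1 heq)
    rw [Walk.length_cons, Nat.even_add_one, ← ih hb h' hp.of_cons, Sym2.eq_swap]
    rcases h.2 with h1 | h1 <;> rcases h'.2 with h2 | h2 <;> grind

section KempeSwap

variable [DecidableEq C]

/-- Since `Equiv.swap α β` fixes every other colour, only the edges of the Kempe chain through `u`
change colour. -/
noncomputable def kempeSwap (H : SimpleGraph V) (c : Sym2 V → C) (α β : C) (u : V) :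
    Sym2 V → C :=
  open Classical in fun e =>
  if ∃ w ∈ e, (kempeChain H c α β).Reachable u w then Equiv.swap α β (c e) else c e

lemma kempeSwap_apply_of_reachable (h : (kempeChain H c α β).Reachable u w) (z : V) :
    kempeSwap H c α β u s(w, z) = Equiv.swap α β (c s(w, z)) :=
  if_pos ⟨w, Sym2.mem_mk_left _ _, h⟩

lemma kempeSwap_apply_of_not_reachable {z : V} (hwz : H.Adj w z)
    (h : ¬ (kempeChain H c α β).Reachable u w) : kempeSwap H c α β u s(w, z) = c s(w, z) := by
  unfold kempeSwap
  split_ifs with hr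
  · obtain ⟨y, hy, hry⟩ := hr
    rcases Sym2.mem_iff.mp hy with rfl | rfl
    · exact absurd hry h
    · have hw (hcol : c s(w, y) = α ∨ c s(w, y) = β) : (kempeChain H c α β).Reachable u w :=
        hry.trans (Adj.reachable (G := kempeChain H c α β) ⟨hwz.symm, Sym2.eq_swap ▸ hcol⟩)
      exact Equiv.swap_apply_of_ne_of_ne (fun h' => h (hw (.inl h'))) (fun h' => h (hw (.inr h')))
  · rfl

lemma kempeSwap_apply_of_ne {e : Sym2 V} (hα : c e ≠ α) (hβ : c e ≠ β) :
    kempeSwap H c α β u e = c e := by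
  unfold kempeSwap
  split_ifs
  exacts [Equiv.swap_apply_of_ne_of_ne hα hβ, rfl]

lemma IsProperEdgeColoring.kempeSwap (hc : H.IsProperEdgeColoring c) :
    H.IsProperEdgeColoring (SimpleGraph.kempeSwap H c α β u) := by
  intro w a b ha hb heq
  by_cases hw : (kempeChain H c α β).Reachable u w
  · rw [kempeSwap_apply_of_reachable hw, kempeSwap_apply_of_reachable hw] at heq
    exact hc ha hb ((Equiv.swap α β).injective heq)
  · rw [kempeSwap_apply_of_not_reachable ha hw, kempeSwap_apply_of_not_reachable hb hw] at heq
    exact hc ha hb heq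

lemma MissesColor.kempeSwap_of_not_reachable {δ : C} (hv : H.MissesColor c v δ)
    (h : ¬ (kempeChain H c α β).Reachable u v) : H.MissesColor (kempeSwap H c α β u) v δ :=
  fun _ hz => kempeSwap_apply_of_not_reachable hz h ▸ hv hz

lemma MissesColor.kempeSwap (hu : H.MissesColor c u α) :
    H.MissesColor (SimpleGraph.kempeSwap H c α β u) u β := by
  intro z hz heq
  rw [kempeSwap_apply_of_reachable (Reachable.refl u), Equiv.swap_apply_eq_iff,
    Equiv.swap_apply_right] at heq
  exact hu hz heq

lemma exists_recoloring_of_not_reachable (hc : H.IsProperEdgeColoring c)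
    (hu : H.MissesColor c u α) (hv : H.MissesColor c v β)
    (hr : ¬ (kempeChain H c α β).Reachable u v) :
    ∃ c' : Sym2 V → C,
      H.IsProperEdgeColoring c' ∧ H.MissesColor c' u β ∧ H.MissesColor c' v β :=
  ⟨_, hc.kempeSwap, hu.kempeSwap, hv.kempeSwap_of_not_reachable hr⟩

end KempeSwap

namespace NoLongOddCycle

variable (hH : H.NoLongOddCycle) (hle : H' ≤ H) (hc : H'.IsProperEdgeColoring c)
include hH hle hc

lemma exists_triangle_of_reachable (huv : H.Adj u v) (hu : H'.MissesColor c u α)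
    (hv : H'.MissesColor c v β) (hr : (kempeChain H' c α β).Reachable u v) :
    ∃ x, H'.Adj u x ∧ H'.Adj x v ∧ c s(u, x) = β ∧ c s(x, v) = α := by
  obtain ⟨p, hp⟩ := hr.exists_isPath
  cases p with
  | nil => exact absurd huv (H.loopless.irrefl u)
  | @cons _ x _ h q =>
    have hq : ¬ Even q.length := (hc.kempeChain_color_eq_iff_even hv h q hp).not.mp (hu h.1)
    have h2 := hH.length_eq_two_of_isPath (hp.mapLe (kempeChain_le.trans hle)) huv.symm
      (by simpa [Nat.even_add_one] using hq)
    cases q with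
    | nil => simp at hq
    | cons h' q =>
      cases q with
      | nil =>
        refine ⟨x, h.1, h'.1, h.2.resolve_left (hu h.1), h'.2.resolve_right fun hβ => ?_⟩
        exact hv h'.1.symm (Sym2.eq_swap ▸ hβ)
      | cons => simp at h2

lemma not_reachable_of_triangle_of_missesColor {b b' : V} (hub : H.Adj u b) (hbb' : H.Adj b b')
    (hb'u : H.Adj b' u) (hu : H'.MissesColor c u α) (hb : H'.MissesColor c b α)
    (hb' : H'.MissesColor c b' α) (hnadj : ¬ (kempeChain H' c γ α).Adj u b) :
    ¬ (kempeChain H' c γ α).Reachable u b := by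
  intro hr
  obtain ⟨p, hp⟩ := hr.exists_isPath
  have hb'p : b' ∉ p.support := hp.isTrail.not_mem_support_of_subsingleton_neighborSet
    hb'u.ne hbb'.ne.symm (hc.subsingleton_neighborSet_kempeChain hb')
  cases p with
  | nil => exact hub.ne rfl
  | @cons _ y _ h q =>
    have hq : Even q.length :=
      (hc.kempeChain_color_eq_iff_even hb h q hp).mp (h.2.resolve_right (hu h.1))
    have hq0 : q.length ≠ 0 := by
      intro h0
      obtain rfl := Walk.eq_of_length_eq_zero h0
      exact hnadj h
    have h2 := hH.length_eq_two_of_isPath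
      ((hp.mapLe (kempeChain_le.trans hle)).concat (by simpa using hb'p) hbb') hb'u
      (by simpa [Nat.even_add_one] using hq)
    simp only [Walk.length_concat, Walk.length_mapLe, Walk.length_cons] at h2
    omega

/-- Once the edge `xv` is deleted, `x` and `v` have degree at most one in the `γ/α` chain, so a
chain path from `u` to one of them avoids the other, and the triangle closes it into a long odd
cycle. -/
lemma not_reachable_of_triangle (huv : H.Adj u v) (hnuv : ¬ H'.Adj u v) (hux : H'.Adj u x)
    (hxv : H'.Adj x v) (hu : H'.MissesColor c u α) (hcux : c s(u, x) = β)
    (hcxv : c s(x, v) = α) (hβα : β ≠ α) (hβγ : β ≠ γ) :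
    ¬ (kempeChain H' c α γ).Reachable u v := by
  set H₀ := H'.deleteEdges {s(x, v)}
  have hle₀ : H₀ ≤ H' := deleteEdges_le _
  have hmiss := hc.missesColor_deleteEdges hxv
  rw [hcxv] at hmiss
  intro hr
  rw [kempeChain_comm] at hr
  rcases hr.deleteEdges_or x with hr | hr <;> rw [← kempeChain_deleteEdges] at hr
  · exact hH.not_reachable_of_triangle_of_missesColor (hle₀.trans hle) (hc.anti hle₀) huv
      (hle hxv).symm (hle hux).symm (hu.anti hle₀) hmiss.2 hmiss.1 (fun h => hnuv (hle₀ h.1)) hr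
  · refine hH.not_reachable_of_triangle_of_missesColor (hle₀.trans hle) (hc.anti hle₀)
      (hle hux) (hle hxv) huv.symm (hu.anti hle₀) hmiss.1 hmiss.2 (fun h => ?_) hr
    rcases h.2 with h | h <;> rw [h] at hcux
    exacts [hβγ hcux.symm, hβα hcux.symm]

lemma exists_common_missesColor [Finite C] (huv : H.Adj u v) (hnuv : ¬ H'.Adj u v)
    (hu : H'.MissesColor c u α) (hv : H'.MissesColor c v β)
    (htri : ∀ x, H.Adj u x → H.Adj x v → 3 ≤ Nat.card C) :
    ∃ (c' : Sym2 V → C) (δ : C), H'.IsProperEdgeColoring c' ∧ H'.MissesColor c' u δ ∧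
      H'.MissesColor c' v δ := by
  classical
  by_cases hαβ : α = β
  · exact ⟨c, α, hc, hu, hαβ ▸ hv⟩
  by_cases hr : (kempeChain H' c α β).Reachable u v
  swap
  · obtain ⟨c', hc', hu', hv'⟩ := exists_recoloring_of_not_reachable hc hu hv hr
    exact ⟨c', β, hc', hu', hv'⟩
  obtain ⟨x, hux, hxv, hcux, hcxv⟩ := hH.exists_triangle_of_reachable hle hc huv hu hv hr
  obtain ⟨γ, hγα, hγβ⟩ := Cardinal.exists_ne_ne_of_three_le
    (by rw [← Nat.cast_card]; exact_mod_cast htri x (hle hux) (hle hxv)) α β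
  have hr₁ := hH.not_reachable_of_triangle hle hc huv hnuv hux hxv hu hcux hcxv
    (Ne.symm hαβ) (Ne.symm hγβ)
  set c₁ := kempeSwap H' c α γ u
  have hc₁ : H'.IsProperEdgeColoring c₁ := hc.kempeSwap
  have hu₁ : H'.MissesColor c₁ u γ := hu.kempeSwap
  have hv₁ : H'.MissesColor c₁ v β := hv.kempeSwap_of_not_reachable hr₁
  have hcux₁ : c₁ s(u, x) = β :=
    (kempeSwap_apply_of_ne (hcux ▸ Ne.symm hαβ) (hcux ▸ hγβ.symm)).trans hcux
  have hcxv₁ : c₁ s(x, v) = α := by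
    rw [Sym2.eq_swap]
    exact (kempeSwap_apply_of_not_reachable hxv.symm hr₁).trans (by rw [Sym2.eq_swap, hcxv])
  have hr₂ : ¬ (kempeChain H' c₁ γ β).Reachable u v := by
    intro hr₂
    obtain ⟨y, huy, -, hcuy, hcyv⟩ := hH.exists_triangle_of_reachable hle hc₁ huv hu₁ hv₁ hr₂
    obtain rfl : y = x := hc₁ huy hux (hcuy.trans hcux₁.symm)
    exact hγα (hcyv.symm.trans hcxv₁)
  obtain ⟨c₂, hc₂, hu₂, hv₂⟩ := exists_recoloring_of_not_reachable hc₁ hu₁ hv₁ hr₂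
  exact ⟨c₂, β, hc₂, hu₂, hv₂⟩

end NoLongOddCycle

theorem NoLongOddCycle.exists_isProperEdgeColoring [Finite V] [Finite C] [Nonempty C]
    (hH : H.NoLongOddCycle) (hdeg : ∀ w, (H.incidenceSet w).ncard ≤ Nat.card C)
    (htri : ∀ a b d, H.Adj a b → H.Adj b d → H.Adj d a → 3 ≤ Nat.card C) :
    ∃ c : Sym2 V → C, H.IsProperEdgeColoring c := by
  classical
  induction H using WellFoundedLT.induction with
  | _ H ih =>
  by_cases hbot : H = ⊥
  · exact ⟨fun _ => Classical.arbitrary C, fun _ _ _ h => by simp [hbot] at h⟩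
  obtain ⟨u, v, huv⟩ : ∃ u v, H.Adj u v := by
    by_contra! h
    exact hbot (eq_bot_iff.mpr fun a b hab => h a b hab)
  set H' := H.deleteEdges {s(u, v)}
  have hle : H' ≤ H := deleteEdges_le _
  have hnuv : ¬ H'.Adj u v := by simp [H']
  have hinc (w : V) : H'.incidenceSet w ⊆ H.incidenceSet w :=
    fun _ he => ⟨edgeSet_subset_edgeSet.mpr hle he.1, he.2⟩
  have hdeg' {w : V} (hw : s(u, v) ∈ H.incidenceSet w) (hw' : s(u, v) ∉ H'.incidenceSet w) :
      (H'.incidenceSet w).ncard < Nat.card C :=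
    (Set.ncard_lt_ncard ((Set.ssubset_iff_of_subset (hinc w)).mpr ⟨_, hw, hw'⟩)).trans_le
      (hdeg w)
  obtain ⟨c, hc⟩ := ih H' (lt_of_le_of_ne hle fun h => hnuv (h ▸ huv)) (hH.anti hle)
    (fun w => (Set.ncard_le_ncard (hinc w)).trans (hdeg w))
    (fun a b d hab hbd hda => htri a b d (hle hab) (hle hbd) (hle hda))
  obtain ⟨α, hu⟩ := exists_missesColor c (hdeg' ((H.mk'_mem_incidenceSet_left_iff).mpr huv)
    (mt (H'.mk'_mem_incidenceSet_left_iff).mp hnuv))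
  obtain ⟨β, hv⟩ := exists_missesColor c (hdeg' ((H.mk'_mem_incidenceSet_right_iff).mpr huv)
    (mt (H'.mk'_mem_incidenceSet_right_iff).mp hnuv))
  obtain ⟨c', δ, hc', hu', hv'⟩ := hH.exists_common_missesColor hle hc huv hnuv hu hv
    fun x hux hxv => htri u x v hux hxv huv.symm
  exact ⟨_, hc'.update hu' hv'⟩

end EdgeColoring

section LineGraph

variable [Finite V]

lemma ncard_incidenceSet_le_cliqueNum_lineGraph (w : V) :
    (H.incidenceSet w).ncard ≤ H.lineGraph.cliqueNum := by
  have hclique : H.lineGraph.IsClique (Subtype.val ⁻¹' H.incidenceSet w) :=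
    fun _ he _ hf hne => lineGraph_adj_iff_exists.mpr ⟨hne, w, he.2, hf.2⟩
  rw [← Set.ncard_preimage_of_injective_subset_range (f := ((↑) : H.edgeSet → Sym2 V))
    Subtype.val_injective (by rw [Subtype.range_coe]; exact H.incidenceSet_subset w)]
  exact hclique.ncard_le_cliqueNum

lemma three_le_cliqueNum_lineGraph {a b d : V} (hab : H.Adj a b) (hbd : H.Adj b d)
    (hda : H.Adj d a) : 3 ≤ H.lineGraph.cliqueNum := by
  classical
  have adj {x y z : V} (hxy : H.Adj x y) (hyz : H.Adj y z) (hxz : x ≠ z) :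
      H.lineGraph.Adj ⟨s(x, y), hxy⟩ ⟨s(y, z), hyz⟩ := by
    refine lineGraph_adj_iff_exists.mpr
      ⟨fun h => ?_, y, Sym2.mem_mk_right _ _, Sym2.mem_mk_left _ _⟩
    rcases Sym2.eq_iff.mp (congrArg Subtype.val h) with ⟨rfl, -⟩ | ⟨h, -⟩
    exacts [hxy.ne rfl, hxz h]
  have h3 := is3Clique_triple_iff.mpr
    ⟨adj hab hbd hda.ne.symm, (adj hda hab hbd.ne.symm).symm, adj hbd hda hab.ne.symm⟩
  exact h3.card_eq ▸ h3.isClique.card_le_cliqueNum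

def IsProperEdgeColoring.lineGraphColoring {C : Type*} {c : Sym2 V → C}
    (hc : H.IsProperEdgeColoring c) : H.lineGraph.Coloring C :=
  Coloring.mk (fun e => c e) fun {e f} hef heq => by
    obtain ⟨hne, w, hwe, hwf⟩ := lineGraph_adj_iff_exists.mp hef
    obtain ⟨a, ha⟩ := Sym2.mem_iff_exists.mp hwe
    obtain ⟨b, hb⟩ := Sym2.mem_iff_exists.mp hwf
    have hwa : H.Adj w a := H.mem_edgeSet.mp (ha ▸ e.2)
    have hwb : H.Adj w b := H.mem_edgeSet.mp (hb ▸ f.2)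
    exact hne (Subtype.ext (by rw [ha, hb, hc hwa hwb (by rwa [← ha, ← hb])]))

theorem NoLongOddCycle.chromaticNumber_lineGraph_eq_cliqueNum (hH : H.NoLongOddCycle) :
    H.lineGraph.chromaticNumber = H.lineGraph.cliqueNum := by
  refine le_antisymm ?_ cliqueNum_le_chromaticNumber
  rcases isEmpty_or_nonempty H.edgeSet with h | ⟨⟨e⟩⟩
  · simp [chromaticNumber_eq_zero_of_isEmpty]
  have : Nonempty (Fin H.lineGraph.cliqueNum) :=
    ⟨⟨0, (isClique_singleton e).ncard_le_cliqueNum.trans_lt' (by simp)⟩⟩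
  obtain ⟨c, hc⟩ := hH.exists_isProperEdgeColoring (C := Fin H.lineGraph.cliqueNum)
    (by simpa using ncard_incidenceSet_le_cliqueNum_lineGraph)
    (by simpa using fun a b d => three_le_cliqueNum_lineGraph)
  simpa using hc.lineGraphColoring.colorable.chromaticNumber_le

end LineGraph

lemma fromEdgeSet_image_val_le (s : Set G.edgeSet) : fromEdgeSet (Subtype.val '' s) ≤ G := by
  rintro a b ⟨⟨e, -, he⟩, -⟩
  exact G.mem_edgeSet.mp (he ▸ e.2)

def lineGraphInduceIso (s : Set G.edgeSet) :
    G.lineGraph.induce s ≃g (fromEdgeSet (Subtype.val '' s)).lineGraph where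
  toFun e := ⟨e.1.1, by
    rw [edgeSet_fromEdgeSet]
    exact ⟨⟨e.1, e.2, rfl⟩, G.not_isDiag_of_mem_edgeSet e.1.2⟩⟩
  invFun f := ⟨⟨f.1, edgeSet_subset_edgeSet.mpr (fromEdgeSet_image_val_le s) f.2⟩, by
    obtain ⟨⟨e, he, hef⟩, -⟩ :=
      (Set.ext_iff.mp (edgeSet_fromEdgeSet (Subtype.val '' s)) f.1).mp f.2
    convert he using 1
    exact Subtype.ext hef.symm⟩
  left_inv _ := rfl
  right_inv _ := rfl
  map_rel_iff' := by simp [lineGraph_adj_iff_exists]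

theorem NoLongOddCycle.isPerfect_lineGraph [Finite V] (hG : G.NoLongOddCycle) :
    G.lineGraph.IsPerfect := by
  intro s
  rw [chromaticNumber_congr (lineGraphInduceIso s), (lineGraphInduceIso s).cliqueNum_eq]
  exact (hG.anti (fromEdgeSet_image_val_le s)).chromaticNumber_lineGraph_eq_cliqueNum

end SimpleGraph

/-- Trotter's theorem: a simple graph is line perfect iff it contains no odd cycle of
length at least 5 as a subgraph. -/
theorem linePerfect_iff_no_long_odd_cycle {V : Type} [Fintype V] (G : SimpleGraph V) :
    G.lineGraph.IsPerfect ↔ ∀ n : ℕ, 5 ≤ n → Odd n → ¬ ContainsSub G (cycleGraph n) :=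
  ⟨fun hperf _ hn hodd hC => not_isPerfect_lineGraph_of_containsSub hn hodd hC hperf,
    fun hG => (noLongOddCycle_iff_not_containsSub.mpr hG).isPerfect_lineGraph⟩
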